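/- Let A be a unital C*-algebra that is finite (xy = 1 implies yx = 1 for x, y ∈ A) and quasi-transitive (if x A y = {0} for some x, y ∈ A, then x = 0 or y = 0), and let τ : A → ℂ be a faithful positive tracial continuous linear functional. If E : A → A is a surjective Schwarz map that preserves τ-fidelity, then E is an automorphism of A: E is a bijective, unital, multiplicative, star-preserving linear map. -/

import Mathlib

/-!
A Schwarz map is positive, hence star-preserving, and with `τ ∘ E = τ` and faithfulness of `τ`
the Schwarz inequality `E 1 * E 1 ≤ E 1` forces `E 1 = 1`. Fidelity of `σ` against the τ-state
`(τ 1)⁻¹ • 1` is `τ(σ^{1/2})` up to a constant, so `E` preserves `τ(b^{1/2})` for `b ≥ 0`.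
For `b ≥ 0`, operator monotonicity of the square root turns the Schwarz inequality into
`E b ≤ E(b²)^{1/2}`, and both sides have the same trace, so `E(b²) = (E b)²`; shifting by a
multiple of `1` extends this to self-adjoint elements. Since `x*x + xx*` is twice the sum of the
squares of the real and imaginary parts of `x`, the two Schwarz defects at `x` and `x*` are
positive with sum zero, so `E(x*x) = (E x)*(E x)`. Polarization then gives multiplicativity,
and injectivity follows from faithfulness.
-/

open scoped ComplexOrder

/-- The absolute value `|x| = (star x * x)^{1/2}` of an element of a C*-algebra,
defined via the continuous functional calculus square root. -/
noncomputable def cstarAbs {A : Type*} [CStarAlgebra A] [PartialOrder A] [StarOrderedRing A]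
    (x : A) : A :=
  CFC.sqrt (star x * x)

/-- The τ-fidelity `F_τ(σ, ρ) = τ(|σ^{1/2} ρ^{1/2}|)`, as a real number. -/
noncomputable def fidelity {A : Type*} [CStarAlgebra A] [PartialOrder A] [StarOrderedRing A]
    (τ : A →L[ℂ] ℂ) (σ ρ : A) : ℝ :=
  (τ (cstarAbs (CFC.sqrt σ * CFC.sqrt ρ))).re

open ComplexStarModule

def IsSchwarzMap {A B : Type*} [CStarAlgebra A] [CStarAlgebra B] [PartialOrder B]
    (E : A →ₗ[ℂ] B) : Prop :=
  ∀ x : A, star (E x) * E x ≤ E (star x * x)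

lemma LinearMap.map_star_mul_of_map_star_mul_self {R S : Type*} [Ring R] [StarRing R]
    [Algebra ℂ R] [StarModule ℂ R] [Ring S] [StarRing S] [Algebra ℂ S] [StarModule ℂ S]
    (E : R →ₗ[ℂ] S) (h : ∀ x, E (star x * x) = star (E x) * E x) (x y : R) :
    E (star x * y) = star (E x) * E y := by
  have h₁ := h (x + y)
  have h₂ := h (x + Complex.I • y)
  simp only [star_add, star_smul, map_add, map_smul, add_mul, mul_add, smul_mul_assoc,
    mul_smul_comm, h x, h y, Complex.star_def, Complex.conj_I] at h₁ h₂
  linear_combination (norm := skip) (1 / 2 : ℂ) • h₁ - (Complex.I / 2) • h₂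
  match_scalars <;> ring_nf <;> simp only [Complex.I_sq] <;> ring

section

variable {A B : Type*} [CStarAlgebra A] [PartialOrder A] [StarOrderedRing A]
  [CStarAlgebra B] [PartialOrder B] [StarOrderedRing B]

lemma le_one_of_mul_self_le_self {p : A} (hp : 0 ≤ p) (hpp : p * p ≤ p) : p ≤ 1 := by
  refine (CStarAlgebra.norm_le_one_iff_of_nonneg p hp).mp ?_
  have h : ‖p‖ * ‖p‖ ≤ ‖p‖ := by
    rw [← CStarRing.norm_self_mul_star, hp.isSelfAdjoint.star_eq]
    exact CStarAlgebra.norm_le_norm_of_nonneg_of_le hp.isSelfAdjoint.mul_self_nonneg hpp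
  nlinarith [norm_nonneg p]

lemma cstarAbs_of_nonneg {a : A} (ha : 0 ≤ a) : cstarAbs a = a := by
  rw [cstarAbs, ha.isSelfAdjoint.star_eq, CFC.sqrt_mul_self a ha]

lemma sqrt_real_smul {r : ℝ} (hr : 0 ≤ r) {a : A} (ha : 0 ≤ a) :
    CFC.sqrt (r • a) = Real.sqrt r • CFC.sqrt a := by
  refine (CFC.sqrt_eq_iff _ _ (smul_nonneg hr ha)
    (smul_nonneg (Real.sqrt_nonneg r) (CFC.sqrt_nonneg a))).mpr ?_
  rw [smul_mul_smul_comm, Real.mul_self_sqrt hr, CFC.sqrt_mul_sqrt_self a ha]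

lemma fidelity_smul_one (τ : A →L[ℂ] ℂ) (σ : A) {r : ℝ} (hr : 0 ≤ r) :
    fidelity τ σ (r • 1) = Real.sqrt r * (τ (CFC.sqrt σ)).re := by
  rw [fidelity, sqrt_real_smul hr zero_le_one, CFC.sqrt_one, mul_smul_comm, mul_one,
    cstarAbs_of_nonneg (smul_nonneg (Real.sqrt_nonneg r) (CFC.sqrt_nonneg σ)),
    τ.map_smul_of_tower, Complex.smul_re, smul_eq_mul]

lemma isSelfAdjoint_map_of_map_nonneg {E : A →ₗ[ℂ] B} (hE : ∀ a, 0 ≤ a → 0 ≤ E a) {h : A}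
    (hh : IsSelfAdjoint h) : IsSelfAdjoint (E h) := by
  obtain ⟨b, c, hb, hc, rfl⟩ := hh.exists_nonneg_sub_nonneg
  rw [map_sub]
  exact (hE b hb).isSelfAdjoint.sub (hE c hc).isSelfAdjoint

lemma map_star_of_map_nonneg {E : A →ₗ[ℂ] B} (hE : ∀ a, 0 ≤ a → 0 ≤ E a) (x : A) :
    E (star x) = star (E x) := by
  have hre := isSelfAdjoint_map_of_map_nonneg hE (ℜ x).2
  have him := isSelfAdjoint_map_of_map_nonneg hE (ℑ x).2
  conv_lhs => rw [← realPart_add_I_smul_imaginaryPart x]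
  conv_rhs => rw [← realPart_add_I_smul_imaginaryPart x]
  simp [hre.star_eq, him.star_eq, (ℜ x).2.star_eq, (ℑ x).2.star_eq]

lemma IsSchwarzMap.map_nonneg {E : A →ₗ[ℂ] B} (hE : IsSchwarzMap E) {a : A} (ha : 0 ≤ a) :
    0 ≤ E a := by
  have h := hE (CFC.sqrt a)
  rw [(CFC.sqrt_nonneg a).isSelfAdjoint.star_eq, CFC.sqrt_mul_sqrt_self a ha] at h
  exact (star_mul_self_nonneg _).trans h

lemma IsSchwarzMap.map_star_mul_self {E : A →ₗ[ℂ] B} (hE : IsSchwarzMap E)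
    (hsa : ∀ h, IsSelfAdjoint h → E (h * h) = E h * E h) (x : A) :
    E (star x * x) = star (E x) * E x := by
  have hstar := map_star_of_map_nonneg fun _ => hE.map_nonneg
  have hre : (ℜ (E x) : B) = E (ℜ x) := by simp [realPart_apply_coe, hstar]
  have him : (ℑ (E x) : B) = E (ℑ x) := by simp [imaginaryPart_apply_coe, hstar]
  have hsum : E (star x * x) + E (x * star x) = star (E x) * E x + E x * star (E x) := by
    rw [← map_add, star_mul_self_add_self_mul_star, star_mul_self_add_self_mul_star, map_nsmul,
      map_add, hsa _ (ℜ x).2, hsa _ (ℑ x).2, hre, him]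
  have h₁ : 0 ≤ E (star x * x) - star (E x) * E x := sub_nonneg.mpr (hE x)
  have h₂ : 0 ≤ E (x * star x) - E x * star (E x) := by
    simpa [hstar] using sub_nonneg.mpr (hE (star x))
  have hdefects := (add_eq_zero_iff_of_nonneg h₁ h₂).mp <| by
    rw [← sub_eq_zero] at hsum
    rw [← hsum]
    abel
  exact sub_eq_zero.mp hdefects.1

lemma LinearMap.map_mul_self_of_isSelfAdjoint {E : A →ₗ[ℂ] B} (hE1 : E 1 = 1)
    (hnn : ∀ b, 0 ≤ b → E (b * b) = E b * E b) {h : A} (hh : IsSelfAdjoint h) :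
    E (h * h) = E h * E h := by
  have hshift : 0 ≤ h + ‖h‖ • 1 := by
    simpa [Algebra.algebraMap_eq_smul_one, neg_le_iff_add_nonneg] using
      hh.neg_algebraMap_norm_le_self
  have h_sq := hnn _ hshift
  simp only [add_mul, mul_add, smul_mul_assoc, mul_smul_comm, one_mul, mul_one, map_add,
    LinearMap.map_smul_of_tower, hE1] at h_sq
  linear_combination (norm := module) h_sq

variable {τ : A →L[ℂ] ℂ}

lemma trace_nonneg (hpos : ∀ x : A, 0 ≤ τ (star x * x)) {a : A} (ha : 0 ≤ a) : 0 ≤ τ a := by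
  simpa [(CFC.sqrt_nonneg a).isSelfAdjoint.star_eq, CFC.sqrt_mul_sqrt_self a ha]
    using hpos (CFC.sqrt a)

lemma ofReal_re_trace (hpos : ∀ x : A, 0 ≤ τ (star x * x)) {a : A} (ha : 0 ≤ a) :
    ((τ a).re : ℂ) = τ a :=
  Complex.ext rfl (Complex.le_def.mp (trace_nonneg hpos ha)).2

lemma trace_inv_re_smul_self (hpos : ∀ x : A, 0 ≤ τ (star x * x)) {a : A} (ha : 0 ≤ a)
    (h : (τ a).re ≠ 0) : τ ((τ a).re⁻¹ • a) = 1 := by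
  rw [τ.map_smul_of_tower, Complex.real_smul]
  nth_rw 2 [← ofReal_re_trace hpos ha]
  rw [← Complex.ofReal_mul, inv_mul_cancel₀ h, Complex.ofReal_one]

lemma eq_zero_of_re_trace_eq_zero (hpos : ∀ x : A, 0 ≤ τ (star x * x))
    (hfaith : ∀ x : A, τ (star x * x) = 0 → x = 0) {a : A} (ha : 0 ≤ a) (h : (τ a).re = 0) :
    a = 0 := by
  have hsqrt : CFC.sqrt a = 0 := hfaith _ <| by
    rw [(CFC.sqrt_nonneg a).isSelfAdjoint.star_eq, CFC.sqrt_mul_sqrt_self a ha,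
      ← ofReal_re_trace hpos ha, h, Complex.ofReal_zero]
  rw [← CFC.sqrt_mul_sqrt_self a ha, hsqrt, zero_mul]

lemma re_trace_pos (hpos : ∀ x : A, 0 ≤ τ (star x * x))
    (hfaith : ∀ x : A, τ (star x * x) = 0 → x = 0) {a : A} (ha : 0 ≤ a) (ha0 : a ≠ 0) :
    0 < (τ a).re :=
  lt_of_le_of_ne (Complex.le_def.mp (trace_nonneg hpos ha)).1
    fun h => ha0 (eq_zero_of_re_trace_eq_zero hpos hfaith ha h.symm)

lemma eq_of_le_of_re_trace_eq (hpos : ∀ x : A, 0 ≤ τ (star x * x))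
    (hfaith : ∀ x : A, τ (star x * x) = 0 → x = 0) {a b : A} (hab : a ≤ b)
    (h : (τ a).re = (τ b).re) : a = b :=
  (sub_eq_zero.mp <| eq_zero_of_re_trace_eq_zero hpos hfaith (sub_nonneg.mpr hab) <| by
    rw [map_sub, Complex.sub_re, h, sub_self]).symm

lemma re_trace_sqrt_map_eq (hpos : ∀ x : A, 0 ≤ τ (star x * x))
    (hfaith : ∀ x : A, τ (star x * x) = 0 → x = 0)
    {E : A →ₗ[ℂ] A} (hE : ∀ a, 0 ≤ a → 0 ≤ E a) (hE1 : E 1 = 1)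
    (hEfid : ∀ σ ρ : A, 0 ≤ σ → τ σ = 1 → 0 ≤ ρ → τ ρ = 1 →
      fidelity τ (E σ) (E ρ) = fidelity τ σ ρ) {b : A} (hb : 0 ≤ b) :
    (τ (CFC.sqrt (E b))).re = (τ (CFC.sqrt b)).re := by
  obtain rfl | hb0 := eq_or_ne b 0
  · rw [map_zero]
  have : Nontrivial A := nontrivial_of_ne b 0 hb0
  have ht := re_trace_pos hpos hfaith hb hb0
  have hu := re_trace_pos hpos hfaith zero_le_one one_ne_zero
  have h := hEfid _ _ (smul_nonneg (inv_nonneg.mpr ht.le) hb)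
    (trace_inv_re_smul_self hpos hb ht.ne') (smul_nonneg (inv_nonneg.mpr hu.le) zero_le_one)
    (trace_inv_re_smul_self hpos zero_le_one hu.ne')
  rw [LinearMap.map_smul_of_tower, LinearMap.map_smul_of_tower, hE1,
    fidelity_smul_one _ _ (inv_nonneg.mpr hu.le), fidelity_smul_one _ _ (inv_nonneg.mpr hu.le),
    sqrt_real_smul (inv_nonneg.mpr ht.le) (hE b hb), sqrt_real_smul (inv_nonneg.mpr ht.le) hb,
    τ.map_smul_of_tower, τ.map_smul_of_tower, Complex.smul_re, Complex.smul_re, smul_eq_mul,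
    smul_eq_mul] at h
  have hsqrt_inv_ne : ∀ {s : ℝ}, 0 < s → Real.sqrt s⁻¹ ≠ 0 :=
    fun hs => (Real.sqrt_pos.mpr (inv_pos.mpr hs)).ne'
  exact mul_left_cancel₀ (hsqrt_inv_ne ht) (mul_left_cancel₀ (hsqrt_inv_ne hu) h)

lemma IsSchwarzMap.map_one (hpos : ∀ x : A, 0 ≤ τ (star x * x))
    (hfaith : ∀ x : A, τ (star x * x) = 0 → x = 0)
    {E : A →ₗ[ℂ] A} (hE : IsSchwarzMap E) (hEτ : τ (E 1) = τ 1) :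
    E 1 = 1 := by
  have hE1 : 0 ≤ E 1 := hE.map_nonneg zero_le_one
  have hsq : E 1 * E 1 ≤ E 1 := by simpa [hE1.isSelfAdjoint.star_eq] using hE 1
  exact eq_of_le_of_re_trace_eq hpos hfaith (le_one_of_mul_self_le_self hE1 hsq)
    (congrArg Complex.re hEτ)

lemma IsSchwarzMap.map_mul_self_of_nonneg (hpos : ∀ x : A, 0 ≤ τ (star x * x))
    (hfaith : ∀ x : A, τ (star x * x) = 0 → x = 0)
    {E : A →ₗ[ℂ] A} (hE : IsSchwarzMap E)
    (hEτ : ∀ x, τ (E x) = τ x)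
    (hsqrt : ∀ b, 0 ≤ b → (τ (CFC.sqrt (E b))).re = (τ (CFC.sqrt b)).re) {b : A} (hb : 0 ≤ b) :
    E (b * b) = E b * E b := by
  have hbb : 0 ≤ b * b := hb.isSelfAdjoint.mul_self_nonneg
  have hle : E b * E b ≤ E (b * b) := by
    simpa [hb.isSelfAdjoint.star_eq, (hE.map_nonneg hb).isSelfAdjoint.star_eq] using hE b
  have hEb : E b = CFC.sqrt (E (b * b)) := by
    refine eq_of_le_of_re_trace_eq hpos hfaith ?_ ?_
    · simpa [CFC.sqrt_mul_self (E b) (hE.map_nonneg hb)] using CFC.sqrt_le_sqrt _ _ hle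
    · rw [hsqrt _ hbb, CFC.sqrt_mul_self b hb, hEτ]
  rw [hEb, CFC.sqrt_mul_sqrt_self _ (hE.map_nonneg hbb)]

end

theorem automorphism_of_schwarz_preserves_fidelity_general
    {A : Type*} [CStarAlgebra A] [PartialOrder A] [StarOrderedRing A]
    (τ : A →L[ℂ] ℂ)
    (hpos : ∀ x : A, 0 ≤ τ (star x * x))
    (hfaith : ∀ x : A, τ (star x * x) = 0 → x = 0)
    (E : A →ₗ[ℂ] A)
    (hSchwarz : ∀ x : A, star (E x) * E x ≤ E (star x * x))
    (hEτ : ∀ x : A, τ (E x) = τ x)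
    (hEfid : ∀ σ ρ : A, 0 ≤ σ → τ σ = 1 → 0 ≤ ρ → τ ρ = 1 →
      fidelity τ (E σ) (E ρ) = fidelity τ σ ρ)
    (hsurj : Function.Surjective E) :
    Function.Bijective E ∧ E 1 = 1 ∧ (∀ x y : A, E (x * y) = E x * E y) ∧
      ∀ x : A, E (star x) = star (E x) := by
  have hE : IsSchwarzMap E := hSchwarz
  have hnn : ∀ a, 0 ≤ a → 0 ≤ E a := fun _ => hE.map_nonneg
  have hE1 : E 1 = 1 := hE.map_one hpos hfaith (hEτ 1)
  have hstar := map_star_of_map_nonneg hnn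
  have hsq : ∀ x, E (star x * x) = star (E x) * E x :=
    hE.map_star_mul_self fun _ => E.map_mul_self_of_isSelfAdjoint hE1 fun _ =>
      hE.map_mul_self_of_nonneg hpos hfaith hEτ fun _ =>
        re_trace_sqrt_map_eq hpos hfaith hnn hE1 hEfid
  have hmul : ∀ x y, E (x * y) = E x * E y := fun x y => by
    simpa [hstar] using E.map_star_mul_of_map_star_mul_self hsq (star x) y
  have hinj : Function.Injective E := (injective_iff_map_eq_zero E).mpr fun x hx =>
    hfaith x (by rw [← hEτ, hsq, hx, mul_zero, map_zero])
  exact ⟨⟨hinj, hsurj⟩, hE1, hmul, hstar⟩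

/-- on a finite, quasi-transitive unital C*-algebra, every surjective Schwarz
map preserving τ-fidelity is an automorphism: bijective, unital, multiplicative and
star-preserving. -/
theorem automorphism_of_schwarz_preserves_fidelity
    {A : Type*} [CStarAlgebra A] [PartialOrder A] [StarOrderedRing A]
    (hfin : ∀ x y : A, x * y = 1 → y * x = 1)
    (hqt : ∀ x y : A, (∀ a : A, x * a * y = 0) → x = 0 ∨ y = 0)
    (τ : A →L[ℂ] ℂ)
    (htr : ∀ x y : A, τ (x * y) = τ (y * x))
    (hpos : ∀ x : A, 0 ≤ τ (star x * x))
    (hfaith : ∀ x : A, τ (star x * x) = 0 → x = 0)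
    (E : A →ₗ[ℂ] A)
    (hSchwarz : ∀ x : A, star (E x) * E x ≤ E (star x * x))
    (hEτ : ∀ x : A, τ (E x) = τ x)
    (hEfid : ∀ σ ρ : A, 0 ≤ σ → τ σ = 1 → 0 ≤ ρ → τ ρ = 1 →
      fidelity τ (E σ) (E ρ) = fidelity τ σ ρ)
    (hsurj : Function.Surjective E) :
    Function.Bijective E ∧ E 1 = 1 ∧ (∀ x y : A, E (x * y) = E x * E y) ∧
      ∀ x : A, E (star x) = star (E x) :=
  automorphism_of_schwarz_preserves_fidelity_general τ hpos hfaith E hSchwarz hEτ hEfid hsurj
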